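/- Under the unassuming condition, ρ̂₀^{conf} = ρ₀ + (1-ρ₁-ρ₀)·|ΔP₀|/(|N| - |ΔN₀| + |ΔP₀|), where ΔP₀ = {x∈P : g(x) ≤ UB} and ΔN₀ = {x∈N : g(x) > UB}; consequently ρ̂₀^{conf} ≥ ρ₀, with equality iff |ΔP₀| = 0. -/
import Mathlib


open MeasureTheory Set

noncomputable def Pr {Ω : Type*} [MeasurableSpace Ω] (μ : Measure Ω) (A : Set Ω) : ℝ :=
  (μ A).toReal

lemma Pr_inter_add_diff {Ω : Type*} [MeasurableSpace Ω] (μ : Measure Ω) [IsFiniteMeasure μ]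
    (A : Set Ω) {B : Set Ω} (hB : MeasurableSet B) :
    Pr μ (A ∩ B) + Pr μ (A \ B) = Pr μ A := by
  unfold Pr
  rw [← ENNReal.toReal_add (measure_ne_top _ _) (measure_ne_top _ _),
    measure_inter_add_diff A hB]

lemma Pr_nonneg {Ω : Type*} [MeasurableSpace Ω] (μ : Measure Ω) (A : Set Ω) :
    0 ≤ Pr μ A := ENNReal.toReal_nonneg

/-- Lemma 3, ρ̂₀ part: Under the unassuming condition,
ρ̂₀^{conf} = ρ₀ + (1-ρ₁-ρ₀)·|ΔP₀|/(|N| - |ΔN₀| + |ΔP₀|), where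
ΔP₀ = P ∩ {g ≤ UB}, ΔN₀ = N ∩ {g > UB}; hence ρ̂₀^{conf} ≥ ρ₀ with equality iff |ΔP₀| = 0. -/
theorem stmt15 {Ω : Type*} [MeasurableSpace Ω] (μ : Measure Ω) [IsProbabilityMeasure μ]
    (P N S : Set Ω) (hP : MeasurableSet P) (hN : MeasurableSet N) (hS : MeasurableSet S)
    (hdisj : P ∩ N = ∅) (hcover : P ∪ N = Set.univ)
    (g : Ω → ℝ) (hg : Measurable g) (UB ρ₁ ρ₀ : ℝ)
    (hρ₁0 : 0 ≤ ρ₁) (hρ₀0 : 0 ≤ ρ₀) (hsum : ρ₁ + ρ₀ < 1)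
    -- class-conditional noise, independent of x given the class (applied to g-events):
    (hnoiseN : ∀ B : Set ℝ, MeasurableSet B →
      Pr μ (S ∩ (N ∩ g ⁻¹' B)) = ρ₀ * Pr μ (N ∩ g ⁻¹' B))
    (hnoiseP : ∀ B : Set ℝ, MeasurableSet B →
      Pr μ (S ∩ (P ∩ g ⁻¹' B)) = (1 - ρ₁) * Pr μ (P ∩ g ⁻¹' B))
    (hden : 0 < Pr μ N - Pr μ (N ∩ {x | UB < g x}) + Pr μ (P ∩ {x | g x ≤ UB})) :
    Pr μ (S ∩ {x | g x ≤ UB}) / (Pr μ (S ∩ {x | g x ≤ UB}) + Pr μ (Sᶜ ∩ {x | g x ≤ UB})) =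
      ρ₀ + (1 - ρ₁ - ρ₀) * Pr μ (P ∩ {x | g x ≤ UB}) /
        (Pr μ N - Pr μ (N ∩ {x | UB < g x}) + Pr μ (P ∩ {x | g x ≤ UB})) ∧
    ρ₀ ≤ Pr μ (S ∩ {x | g x ≤ UB}) /
        (Pr μ (S ∩ {x | g x ≤ UB}) + Pr μ (Sᶜ ∩ {x | g x ≤ UB})) ∧
    (Pr μ (S ∩ {x | g x ≤ UB}) / (Pr μ (S ∩ {x | g x ≤ UB}) + Pr μ (Sᶜ ∩ {x | g x ≤ UB}))
        = ρ₀ ↔ Pr μ (P ∩ {x | g x ≤ UB}) = 0) := by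
  set le : Set Ω := {x | g x ≤ UB} with hle
  have hleM : MeasurableSet le := hg measurableSet_Iic
  have hleEq : le = g ⁻¹' (Set.Iic UB) := rfl
  have hPc : Pᶜ = N := by
    ext x
    simp only [Set.mem_compl_iff]
    constructor
    · intro hx
      rcases (show x ∈ P ∪ N from hcover ▸ Set.mem_univ x) with h | h
      · exact absurd h hx
      · exact h
    · intro hx hxP
      have : x ∈ P ∩ N := ⟨hxP, hx⟩
      simp [hdisj] at this
  set a := Pr μ (P ∩ le) with ha
  set b := Pr μ (N ∩ le) with hb
  have ha0 : 0 ≤ a := Pr_nonneg _ _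
  have hb0 : 0 ≤ b := Pr_nonneg _ _
  -- N split
  have hNdiff : N \ le = N ∩ {x | UB < g x} := by
    ext x; simp [hle, not_le]
  have hNsplit : b + Pr μ (N ∩ {x | UB < g x}) = Pr μ N := by
    rw [← hNdiff]; exact Pr_inter_add_diff μ N hleM
  -- le split
  have hlediff : le \ P = N ∩ le := by
    rw [Set.diff_eq, Set.inter_comm, hPc]
  have hlesplit : a + b = Pr μ le := by
    have := Pr_inter_add_diff μ le hP
    rw [hlediff] at this
    rw [ha, hb, Set.inter_comm le P] at *
    linarith [this]
  -- S ∩ le split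
  have hSle1 : (S ∩ le) ∩ P = S ∩ (P ∩ g ⁻¹' (Set.Iic UB)) := by
    rw [← hleEq]; ext x; simp [Set.mem_inter_iff]; tauto
  have hSle2 : (S ∩ le) \ P = S ∩ (N ∩ g ⁻¹' (Set.Iic UB)) := by
    rw [← hleEq, Set.diff_eq, Set.inter_assoc, Set.inter_comm le Pᶜ, hPc]
  have hSval : Pr μ (S ∩ le) = (1 - ρ₁) * a + ρ₀ * b := by
    have h := Pr_inter_add_diff μ (S ∩ le) hP
    rw [hSle1, hSle2, hnoiseP _ measurableSet_Iic, hnoiseN _ measurableSet_Iic] at h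
    rw [← hleEq] at h
    linarith [h]
  -- Sᶜ ∩ le
  have hScval : Pr μ (Sᶜ ∩ le) = ρ₁ * a + (1 - ρ₀) * b := by
    have h := Pr_inter_add_diff μ le hS
    have h2 : le \ S = Sᶜ ∩ le := by rw [Set.diff_eq, Set.inter_comm]
    rw [h2, Set.inter_comm le S, ← hlesplit, hSval] at h
    linarith [h]
  have hab : 0 < a + b := by
    have : Pr μ N - Pr μ (N ∩ {x | UB < g x}) = b := by linarith [hNsplit]
    rw [this] at hden; linarith [hden]
  have habne : a + b ≠ 0 := ne_of_gt hab
  have hsumden : Pr μ N - Pr μ (N ∩ {x | UB < g x}) + a = a + b := by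
    linarith [hNsplit]
  have hxy : Pr μ (S ∩ le) + Pr μ (Sᶜ ∩ le) = a + b := by
    rw [hSval, hScval]; ring
  have hone : 0 < 1 - ρ₁ - ρ₀ := by linarith
  have hmain : Pr μ (S ∩ le) / (Pr μ (S ∩ le) + Pr μ (Sᶜ ∩ le)) =
      ρ₀ + (1 - ρ₁ - ρ₀) * a / (a + b) := by
    rw [hxy, hSval]
    field_simp
    ring
  refine ⟨?_, ?_, ?_⟩
  · rw [hmain, hsumden]
  · rw [hmain]
    have : 0 ≤ (1 - ρ₁ - ρ₀) * a / (a + b) :=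
      div_nonneg (mul_nonneg (le_of_lt hone) ha0) (le_of_lt hab)
    linarith
  · rw [hmain]
    constructor
    · intro h
      have h' : (1 - ρ₁ - ρ₀) * a / (a + b) = 0 := by linarith
      rcases mul_eq_zero.mp (div_eq_zero_iff.mp h' |>.resolve_right habne) with h'' | h''
      · linarith
      · exact h''
    · intro h
      rw [h]; ring
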